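/- Fix parameters ε, π̲0 ∈ (0,1) and a level α ∈ (0,1), a vector p ∈ [0,1]^m, an index i ∈ {1,…,m}, and let p' ∈ [0,1]^m be any vector such that for every j, p'_j ≤ p_j if p_j ≤ p_i, and p'_j = p_j if p_j > p_i. If p_i ≤ κ̂(p), then κ̂(p) = κ̂(p') and π̂^IMS_{0,ε,π̲0,κ̂(p)}(p) = π̂^IMS_{0,ε,π̲0,κ̂(p')}(p'). -/

import Mathlib

open MeasureTheory ProbabilityTheory
open scoped ENNReal

noncomputable section

/-- The least favorable null distribution `Q_{0,s}` on `Fin s → ℝ` in the independent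
setting: first coordinate `0`, remaining coordinates i.i.d. uniform on `(0,1)`. -/
def Q0 (s : ℕ) : Measure (Fin s → ℝ) :=
  Measure.pi fun i =>
    if (i : ℕ) = 0 then Measure.dirac 0 else volume.restrict (Set.Ioo 0 1)

open Classical in
/-- Inner random quantity in the normalizing factor `c(s,ε)`:
`1 ∨ max_{λ ∈ {q_i} ∩ (0,1-ε)} s(1-λ)/(1 ∨ #{i : q_i > λ})` (empty max taken as `1`). -/
def cInner (s : ℕ) (ε : ℝ) (q : Fin s → ℝ) : ℝ :=
  max 1
    (WithBot.unbotD 1 (((Finset.univ.filter fun i : Fin s => 0 < q i ∧ q i < 1 - ε).image fun i =>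
        (s : ℝ) * (1 - q i) /
          max 1 ((Finset.univ.filter fun j => q i < q j).card : ℝ)).max))

/-- The quantity `c(s,ε)`. -/
def cVal (s : ℕ) (ε : ℝ) : ℝ := ∫ q, cInner s ε q ∂(Q0 s)

open Classical in
/-- The normalizing factor `C(m,ε,π̲₀) = max{c(s,ε) : π̲₀ m ≤ s ≤ m}`. -/
def Cfac (m : ℕ) (ε pl : ℝ) : ℝ :=
  WithBot.unbotD 1 ((((Finset.range (m + 1)).filter fun s : ℕ => pl * (m : ℝ) ≤ (s : ℝ)).image fun s =>
    cVal s ε).max)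

open Classical in
/-- Inner random quantity in the normalizing factor `d(s,ε)`: the maximum, over open
intervals `I = (a,b)` with `0 ≤ a ≤ b - ε` and endpoints in `{q_i} ∪ {0,1}`, of
`s(b-a)/(1 ∨ #{i : q_i ∈ I})`. -/
def dInner (s : ℕ) (ε : ℝ) (q : Fin s → ℝ) : ℝ :=
  WithBot.unbotD 0 ((((((Finset.univ.image q) ∪ {0, 1}) ×ˢ ((Finset.univ.image q) ∪ {0, 1})).filter
      (fun ab : ℝ × ℝ => 0 ≤ ab.1 ∧ ab.1 ≤ ab.2 - ε)).image fun ab =>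
        (s : ℝ) * (ab.2 - ab.1) /
          max 1 ((Finset.univ.filter fun i => ab.1 < q i ∧ q i < ab.2).card : ℝ)).max)

/-- The quantity `d(s,ε)`. -/
def dVal (s : ℕ) (ε : ℝ) : ℝ := ∫ q, dInner s ε q ∂(Q0 s)

open Classical in
/-- The normalizing factor `D(m,ε,π̲₀) = max{d(s,ε) : π̲₀ m ≤ s ≤ m}`. -/
def Dfac (m : ℕ) (ε pl : ℝ) : ℝ :=
  WithBot.unbotD 1 ((((Finset.range (m + 1)).filter fun s : ℕ => pl * (m : ℝ) ≤ (s : ℝ)).image fun s =>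
    dVal s ε).max)

open Classical in
/-- `inf_{λ ∈ [0,1-ε]} (1 ∨ #{i : p_i ≥ λ})/(m(1-λ))`. -/
def msInf (m : ℕ) (ε : ℝ) (p : Fin m → ℝ) : ℝ :=
  sInf ((fun lam =>
    (max 1 ((Finset.univ.filter fun i => lam ≤ p i).card : ℝ)) / (m * (1 - lam))) ''
      Set.Icc 0 (1 - ε))

/-- The min-Storey estimator `π̂^MS_{0,ε,π̲₀}`. -/
def msEst (m : ℕ) (ε pl : ℝ) (p : Fin m → ℝ) : ℝ :=
  max pl (Cfac m ε pl * msInf m ε p)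

open Classical in
/-- `inf` over open intervals `I = (a,b) ⊆ [κ,1]` with `|I| ≥ ε` of
`(1 ∨ #{i : p_i ∈ I})/(m |I|)`. -/
def imsInf (m : ℕ) (ε κ : ℝ) (p : Fin m → ℝ) : ℝ :=
  sInf {x : ℝ | ∃ a b : ℝ, κ ≤ a ∧ b ≤ 1 ∧ ε ≤ b - a ∧
    x = (max 1 ((Finset.univ.filter fun i => a < p i ∧ p i < b).card : ℝ)) / (m * (b - a))}

/-- The interval-min-Storey estimator `π̂^IMS_{0,ε,π̲₀,κ}`. -/
def imsEst (m : ℕ) (ε pl κ : ℝ) (p : Fin m → ℝ) : ℝ :=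
  max pl (Dfac m ε pl * imsInf m ε κ p)

open Classical in
/-- Empirical CDF `F̂_m(t) = m⁻¹ #{i : p_i ≤ t}`. -/
def Fhat (m : ℕ) (p : Fin m → ℝ) (t : ℝ) : ℝ :=
  ((Finset.univ.filter fun i => p i ≤ t).card : ℝ) / m

/-- The data-driven capping `κ̂ = sup{κ ∈ [0,1-ε] : F̂_m(κ) ≥ κ π̂^IMS_{0,ε,π̲₀,κ}/α}`. -/
def kappaHat (m : ℕ) (ε pl α : ℝ) (p : Fin m → ℝ) : ℝ :=
  sSup {κ : ℝ | κ ∈ Set.Icc 0 (1 - ε) ∧ κ * imsEst m ε pl κ p / α ≤ Fhat m p κ}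

lemma unbot'_nonneg_of_forall {F : Finset ℝ} {d : ℝ} (hd : 0 ≤ d)
    (h : ∀ x ∈ F, 0 ≤ x) : 0 ≤ WithBot.unbotD d F.max := by
  cases hM : F.max with
  | bot => simpa using hd
  | coe v => simpa using h v (Finset.mem_of_max hM)

lemma dInner_nonneg (s : ℕ) {ε : ℝ} (hε : 0 ≤ ε) (q : Fin s → ℝ) : 0 ≤ dInner s ε q := by
  classical
  apply unbot'_nonneg_of_forall le_rfl
  intro x hx
  simp only [Finset.mem_image, Finset.mem_filter] at hx
  obtain ⟨ab, ⟨-, h1, h2⟩, rfl⟩ := hx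
  apply div_nonneg
  · exact mul_nonneg (Nat.cast_nonneg _) (by linarith)
  · exact le_trans zero_le_one (le_max_left _ _)

lemma dVal_nonneg (s : ℕ) {ε : ℝ} (hε : 0 ≤ ε) : 0 ≤ dVal s ε :=
  MeasureTheory.integral_nonneg fun q => dInner_nonneg s hε q

lemma Dfac_nonneg (m : ℕ) {ε : ℝ} (hε : 0 ≤ ε) (pl : ℝ) : 0 ≤ Dfac m ε pl := by
  classical
  apply unbot'_nonneg_of_forall zero_le_one
  intro x hx
  simp only [Finset.mem_image] at hx
  obtain ⟨s, -, rfl⟩ := hx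
  exact dVal_nonneg s hε

lemma real_sInf_le_sInf {s t : Set ℝ} (hbdd : BddBelow s) (ht : t.Nonempty)
    (h : ∀ y ∈ t, ∃ x ∈ s, x ≤ y) : sInf s ≤ sInf t := by
  apply le_csInf ht
  intro y hy
  obtain ⟨x, hx, hxy⟩ := h y hy
  exact (csInf_le hbdd hx).trans hxy

/-- Lemma on the invariance of `κ̂`: if `p'` is a modification of `p`
that only decreases the coordinates `≤ p_i` and fixes the others, and `p_i ≤ κ̂(p)`, then
`κ̂(p) = κ̂(p')` and the corresponding IMS estimators agree. -/
theorem statement19 (m : ℕ) (hm : 1 ≤ m)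
    (ε pl α : ℝ) (hε : ε ∈ Set.Ioo (0 : ℝ) 1) (hpl : pl ∈ Set.Ioo (0 : ℝ) 1)
    (hα : α ∈ Set.Ioo (0 : ℝ) 1)
    (p p' : Fin m → ℝ)
    (hp : ∀ j, p j ∈ Set.Icc (0 : ℝ) 1) (hp' : ∀ j, p' j ∈ Set.Icc (0 : ℝ) 1)
    (i : Fin m)
    (h : ∀ j, (p j ≤ p i ∧ p' j ≤ p j) ∨ (p i < p j ∧ p' j = p j))
    (hpi : p i ≤ kappaHat m ε pl α p) :
    kappaHat m ε pl α p = kappaHat m ε pl α p' ∧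
      imsEst m ε pl (kappaHat m ε pl α p) p = imsEst m ε pl (kappaHat m ε pl α p') p' := by
  classical
  obtain ⟨hε0, hε1⟩ := hε
  obtain ⟨hα0, hα1⟩ := hα
  obtain ⟨hpl0, hpl1⟩ := hpl
  have hm0 : (0 : ℝ) < m := by exact_mod_cast hm
  have hle : ∀ j, p' j ≤ p j := fun j => (h j).elim (fun hj => hj.2) (fun hj => hj.2.le)
  have hD : 0 ≤ Dfac m ε pl := Dfac_nonneg m hε0.le pl
  -- monotonicity of `Fhat` under pointwise decrease of `p`
  have hFmono : ∀ t, Fhat m p t ≤ Fhat m p' t := by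
    intro t
    unfold Fhat
    rw [div_le_div_iff_of_pos_right hm0]
    refine Nat.cast_le.mpr (Finset.card_le_card ?_)
    intro j hj
    simp only [Finset.mem_filter, Finset.mem_univ, true_and] at hj ⊢
    exact (hle j).trans hj
  -- reverse inequality for `Fhat` at thresholds above `p i`
  have hFmono' : ∀ t, p i ≤ t → Fhat m p' t ≤ Fhat m p t := by
    intro t ht
    unfold Fhat
    rw [div_le_div_iff_of_pos_right hm0]
    refine Nat.cast_le.mpr (Finset.card_le_card ?_)
    intro j hj
    simp only [Finset.mem_filter, Finset.mem_univ, true_and] at hj ⊢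
    rcases h j with ⟨c1, _⟩ | ⟨_, c2⟩
    · exact c1.trans ht
    · rw [← c2]; exact hj
  -- monotonicity of `imsInf` (on levels `κ > p i - ε`)
  have hMono : ∀ κ : ℝ, p i - ε < κ → κ ≤ 1 - ε → imsInf m ε κ p' ≤ imsInf m ε κ p := by
    intro κ hκpi hκ1
    unfold imsInf
    apply real_sInf_le_sInf
    · refine ⟨0, ?_⟩
      rintro x ⟨a, b, h1, h2, h3, rfl⟩
      exact div_nonneg (le_trans zero_le_one (le_max_left _ _))
        (mul_nonneg (Nat.cast_nonneg _) (by linarith))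
    · exact ⟨_, κ, 1, le_rfl, le_rfl, by linarith, rfl⟩
    · rintro y ⟨a, b, h1, h2, h3, rfl⟩
      refine ⟨_, ⟨a, b, h1, h2, h3, rfl⟩, ?_⟩
      rw [div_le_div_iff_of_pos_right (mul_pos hm0 (by linarith))]
      refine max_le_max le_rfl (Nat.cast_le.mpr (Finset.card_le_card ?_))
      intro j hj
      simp only [Finset.mem_filter, Finset.mem_univ, true_and] at hj ⊢
      rcases h j with ⟨c1, _⟩ | ⟨_, c2⟩
      · exact ⟨lt_of_lt_of_le hj.1 (hle j), by linarith⟩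
      · rw [← c2]; exact hj
  -- reverse inequality for `imsInf` at levels above `p i`
  have hMono' : ∀ κ : ℝ, p i ≤ κ → κ ≤ 1 - ε → imsInf m ε κ p ≤ imsInf m ε κ p' := by
    intro κ hκpi hκ1
    unfold imsInf
    apply real_sInf_le_sInf
    · refine ⟨0, ?_⟩
      rintro x ⟨a, b, h1, h2, h3, rfl⟩
      exact div_nonneg (le_trans zero_le_one (le_max_left _ _))
        (mul_nonneg (Nat.cast_nonneg _) (by linarith))
    · exact ⟨_, κ, 1, le_rfl, le_rfl, by linarith, rfl⟩
    · rintro y ⟨a, b, h1, h2, h3, rfl⟩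
      refine ⟨_, ⟨a, b, h1, h2, h3, rfl⟩, ?_⟩
      rw [div_le_div_iff_of_pos_right (mul_pos hm0 (by linarith))]
      refine max_le_max le_rfl (Nat.cast_le.mpr (Finset.card_le_card ?_))
      intro j hj
      simp only [Finset.mem_filter, Finset.mem_univ, true_and] at hj ⊢
      rcases h j with ⟨c1, _⟩ | ⟨_, c2⟩
      · exact absurd hj.1 (by linarith)
      · rw [c2]; exact hj
  have hEstMono : ∀ κ : ℝ, p i - ε < κ → κ ≤ 1 - ε →
      imsEst m ε pl κ p' ≤ imsEst m ε pl κ p := by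
    intro κ h1 h2
    unfold imsEst
    exact max_le_max le_rfl (mul_le_mul_of_nonneg_left (hMono κ h1 h2) hD)
  have hEstEq : ∀ κ : ℝ, p i ≤ κ → κ ≤ 1 - ε →
      imsEst m ε pl κ p = imsEst m ε pl κ p' := by
    intro κ h1 h2
    unfold imsEst
    rw [le_antisymm (hMono' κ h1 h2) (hMono κ (by linarith) h2)]
  -- the defining sets of kappaHat
  have hKp : kappaHat m ε pl α p =
      sSup {κ : ℝ | κ ∈ Set.Icc 0 (1 - ε) ∧ κ * imsEst m ε pl κ p / α ≤ Fhat m p κ} := rfl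
  have hKp' : kappaHat m ε pl α p' =
      sSup {κ : ℝ | κ ∈ Set.Icc 0 (1 - ε) ∧ κ * imsEst m ε pl κ p' / α ≤ Fhat m p' κ} := rfl
  have h0S : ∀ q : Fin m → ℝ,
      (0 : ℝ) ∈ {κ : ℝ | κ ∈ Set.Icc 0 (1 - ε) ∧ κ * imsEst m ε pl κ q / α ≤ Fhat m q κ} := by
    intro q
    refine ⟨⟨le_rfl, by linarith⟩, ?_⟩
    rw [zero_mul, zero_div]
    unfold Fhat
    positivity
  have hbddS : ∀ q : Fin m → ℝ,
      BddAbove {κ : ℝ | κ ∈ Set.Icc 0 (1 - ε) ∧ κ * imsEst m ε pl κ q / α ≤ Fhat m q κ} :=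
    fun q => ⟨1 - ε, fun κ hκ => hκ.1.2⟩
  -- membership transfer from S(p) to S(p')
  have hStoS' : ∀ κ : ℝ,
      κ ∈ {κ : ℝ | κ ∈ Set.Icc 0 (1 - ε) ∧ κ * imsEst m ε pl κ p / α ≤ Fhat m p κ} →
      p i - ε < κ →
      κ ∈ {κ : ℝ | κ ∈ Set.Icc 0 (1 - ε) ∧ κ * imsEst m ε pl κ p' / α ≤ Fhat m p' κ} := by
    rintro κ ⟨hκI, hκC⟩ hκpi
    refine ⟨hκI, le_trans (le_trans ?_ hκC) (hFmono κ)⟩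
    rw [div_le_div_iff_of_pos_right hα0]
    exact mul_le_mul_of_nonneg_left (hEstMono κ hκpi hκI.2) hκI.1
  -- membership transfer from S(p') to S(p) for κ ≥ p i
  have hS'toS : ∀ κ : ℝ,
      κ ∈ {κ : ℝ | κ ∈ Set.Icc 0 (1 - ε) ∧ κ * imsEst m ε pl κ p' / α ≤ Fhat m p' κ} →
      p i ≤ κ →
      κ ∈ {κ : ℝ | κ ∈ Set.Icc 0 (1 - ε) ∧ κ * imsEst m ε pl κ p / α ≤ Fhat m p κ} := by
    rintro κ ⟨hκI, hκC⟩ hκpi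
    refine ⟨hκI, ?_⟩
    rw [hEstEq κ hκpi hκI.2]
    exact le_trans hκC (hFmono' κ hκpi)
  have hgoal1 : kappaHat m ε pl α p = kappaHat m ε pl α p' := by
    rw [hKp, hKp']
    apply le_antisymm
    · apply le_of_forall_lt
      intro c hc
      have hpis : p i - ε <
          sSup {κ : ℝ | κ ∈ Set.Icc 0 (1 - ε) ∧ κ * imsEst m ε pl κ p / α ≤ Fhat m p κ} := by
        rw [← hKp]; linarith
      have hlt : max c (p i - ε) <
          sSup {κ : ℝ | κ ∈ Set.Icc 0 (1 - ε) ∧ κ * imsEst m ε pl κ p / α ≤ Fhat m p κ} :=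
        max_lt hc hpis
      obtain ⟨κ, hκS, hκgt⟩ := exists_lt_of_lt_csSup ⟨0, h0S p⟩ hlt
      have hκS' := hStoS' κ hκS (lt_of_le_of_lt (le_max_right _ _) hκgt)
      exact lt_of_le_of_lt (le_max_left c _) hκgt |>.trans_le (le_csSup (hbddS p') hκS')
    · apply csSup_le ⟨0, h0S p'⟩
      intro κ hκ
      by_cases hcase : p i ≤ κ
      · exact le_csSup (hbddS p) (hS'toS κ hκ hcase)
      · rw [← hKp]
        exact le_trans (le_of_not_ge hcase) hpi
  refine ⟨hgoal1, ?_⟩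
  rw [← hgoal1]
  have hK1 : kappaHat m ε pl α p ≤ 1 - ε := by
    rw [hKp]
    exact csSup_le ⟨0, h0S p⟩ fun κ hκ => hκ.1.2
  exact hEstEq _ hpi hK1

end
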